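/- arXiv:1609.05110 — 7 statements merged into one kernel-verified Lean document; each statement's English description precedes it below -/
import Mathlib

section
/- Let H=(X,E) be a hypergraph with maximum degree Δ (every vertex belongs to at most Δ hyperedges) and let C ⊆ X with |C| = k. Then the number of distinct equivalence classes induced by C, i.e., |{e ∩ C : e ∈ E}|, is at most k(Δ+1)/2 + 1. -/
/-! The nonempty traces `e ∩ C` form a family of subsets of `C` in which every point of `C`
has degree at most `Δ` (distinct traces through `x` come from distinct edges through `x`), so
their sizes add up to at most `kΔ`. At most `k` of them are singletons and the others have size
at least `2`, hence twice their number is at most `k + kΔ`; the empty trace adds one more. -/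

open Finset

namespace Finset

variable {α : Type*} [DecidableEq α]

theorem two_mul_card_le_card_add_sum_card {C : Finset α} {F : Finset (Finset α)}
    (hsub : ∀ S ∈ F, S ⊆ C) (hne : ∅ ∉ F) : 2 * #F ≤ #C + ∑ S ∈ F, #S := by
  have hsingletons : #{S ∈ F | #S = 1} ≤ #C := by
    calc #{S ∈ F | #S = 1} ≤ #(C.image ({·})) := by
          refine card_le_card fun S hS => ?_
          obtain ⟨hSF, hS1⟩ := mem_filter.mp hS
          obtain ⟨x, rfl⟩ := card_eq_one.mp hS1
          exact mem_image.mpr ⟨x, hsub _ hSF (mem_singleton_self x), rfl⟩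
      _ ≤ #C := card_image_le
  have hpointwise : ∀ S ∈ F, 2 ≤ #S + if #S = 1 then 1 else 0 := by
    intro S hS
    have : 0 < #S := card_pos.mpr (nonempty_iff_ne_empty.mpr (ne_of_mem_of_not_mem hS hne))
    split_ifs <;> omega
  calc 2 * #F = ∑ _S ∈ F, 2 := by rw [sum_const, smul_eq_mul, mul_comm]
    _ ≤ ∑ S ∈ F, (#S + if #S = 1 then 1 else 0) := sum_le_sum hpointwise
    _ = ∑ S ∈ F, #S + #{S ∈ F | #S = 1} := by rw [sum_add_distrib, sum_boole, Nat.cast_id]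
    _ ≤ #C + ∑ S ∈ F, #S := by omega

theorem two_mul_card_le_of_degree_le {C : Finset α} {F : Finset (Finset α)} {Δ : ℕ}
    (hsub : ∀ S ∈ F, S ⊆ C) (hdeg : ∀ x ∈ C, #{S ∈ F | x ∈ S} ≤ Δ) :
    2 * #F ≤ #C * (Δ + 1) + 2 := by
  set G := F.erase ∅
  have hG : ∀ S ∈ G, S ⊆ C := fun S hS => hsub S (mem_of_mem_erase hS)
  have hsum : ∑ S ∈ G, #S ≤ #C * Δ := by
    calc ∑ S ∈ G, #S = ∑ S ∈ G, #(C ∩ S) :=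
          sum_congr rfl fun S hS => by rw [inter_eq_right.mpr (hG S hS)]
      _ ≤ #C * Δ := sum_card_inter_le fun x hx =>
          (card_le_card (filter_subset_filter _ (erase_subset _ _))).trans (hdeg x hx)
  have hGF : #F - 1 ≤ #G := pred_card_le_card_erase
  have hmain := two_mul_card_le_card_add_sum_card hG (notMem_erase ∅ F)
  rw [Nat.mul_succ]
  omega

theorem card_filter_mem_image_inter_le (E : Finset (Finset α)) {C : Finset α} {x : α}
    (hx : x ∈ C) : #{S ∈ E.image (· ∩ C) | x ∈ S} ≤ #{e ∈ E | x ∈ e} := by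
  rw [filter_image]
  refine card_image_le.trans_eq (congrArg card (filter_congr fun e _ => ?_))
  simp [hx]

end Finset

theorem stmt_3_general {α : Type*} [DecidableEq α] (X : Finset α) (E : Finset (Finset α))
    (Δ : ℕ)
    (hdeg : ∀ x ∈ X, (E.filter (fun e => x ∈ e)).card ≤ Δ)
    (C : Finset α) (hC : C ⊆ X) (k : ℕ) (hk : C.card = k) :
    2 * (E.image (fun e => e ∩ C)).card ≤ k * (Δ + 1) + 2 := by
  subst hk
  refine two_mul_card_le_of_degree_le ?_ fun x hx => ?_
  · simp only [mem_image]
    rintro _ ⟨e, -, rfl⟩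
    exact inter_subset_right
  · exact (card_filter_mem_image_inter_le E hx).trans (hdeg x (hC hx))

/-- In a hypergraph of maximum degree `Δ`, a set `C` of `k` vertices induces at
most `k(Δ+1)/2 + 1` equivalence classes (stated multiplied by 2 to stay in ℕ). -/
theorem stmt_3 {α : Type*} [DecidableEq α] (X : Finset α) (E : Finset (Finset α))
    (hE : ∀ e ∈ E, e ⊆ X) (Δ : ℕ)
    (hdeg : ∀ x ∈ X, (E.filter (fun e => x ∈ e)).card ≤ Δ)
    (C : Finset α) (hC : C ⊆ X) (k : ℕ) (hk : C.card = k) :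
    2 * (E.image (fun e => e ∩ C)).card ≤ k * (Δ + 1) + 2 :=
  stmt_3_general X E Δ hdeg C hC k hk
end

section
/- (Sauer-Shelah Lemma) Let H=(X,E) be a hypergraph with more than ∑_{i=0}^{d-1} binom(|X|, i) distinct hyperedges. Then H has VC dimension at least d, i.e., there exists a set S ⊆ X with |S| = d that is shattered by E. -/
/-! Every shattered set lies in the ground set `X`, so the shatterer of `E` consists of subsets of
`X` of size at most the VC dimension. Pajor's inequality `#E ≤ #E.shatterer` then bounds `#E` by
`∑_{k ≤ vcDim E} C(|X|, k)`; hence `#E > ∑_{k < d} C(|X|, k)` forces `vcDim E ≥ d`, and a shattered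
set of maximal size contains a shattered `d`-set. -/

namespace Finset

variable {α : Type*} [DecidableEq α] {𝒜 : Finset (Finset α)} {s X : Finset α} {d : ℕ}

lemma Shatters.subset_of_forall_subset (hs : 𝒜.Shatters s) (h𝒜 : ∀ t ∈ 𝒜, t ⊆ X) : s ⊆ X :=
  let ⟨_, ht, hst⟩ := hs.exists_superset
  hst.trans (h𝒜 _ ht)

lemma card_le_sum_choose_vcDim_of_forall_subset (h𝒜 : ∀ t ∈ 𝒜, t ⊆ X) :
    #𝒜 ≤ ∑ k ∈ range (𝒜.vcDim + 1), (#X).choose k := by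
  simp_rw [← card_powersetCard]
  refine 𝒜.card_le_card_shatterer.trans <|
    (card_le_card fun s hs ↦ mem_biUnion.2 ⟨#s, ?_⟩).trans card_biUnion_le
  rw [mem_shatterer] at hs
  exact ⟨mem_range.2 (Nat.lt_succ_of_le hs.card_le_vcDim),
    mem_powersetCard.2 ⟨hs.subset_of_forall_subset h𝒜, rfl⟩⟩

lemma exists_shatters_card_eq_of_le_vcDim (h𝒜 : 𝒜.Nonempty) (hd : d ≤ 𝒜.vcDim) :
    ∃ s, 𝒜.Shatters s ∧ #s = d := by
  obtain ⟨s, hs, hsd⟩ := exists_mem_eq_sup _ ⟨∅, mem_shatterer.2 (shatters_empty.2 h𝒜)⟩ card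
  obtain ⟨t, hts, htd⟩ := exists_subset_card_eq (hd.trans_eq hsd)
  exact ⟨t, (mem_shatterer.1 hs).mono_right hts, htd⟩

end Finset

/-- Sauer-Shelah Lemma: a hypergraph with more than `∑_{i<d} C(|X|,i)` distinct
hyperedges has VC dimension at least `d`: some `d`-set is shattered. -/
theorem stmt_4 {α : Type*} [DecidableEq α] (X : Finset α) (E : Finset (Finset α))
    (hE : ∀ e ∈ E, e ⊆ X) (d : ℕ)
    (hcard : ∑ i ∈ Finset.range d, (X.card).choose i < E.card) :
    ∃ S ⊆ X, S.card = d ∧ ∀ T ⊆ S, ∃ e ∈ E, e ∩ S = T := by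
  have hE_nonempty : E.Nonempty := Finset.card_pos.1 (Nat.zero_lt_of_lt hcard)
  have hd : d ≤ E.vcDim := by
    by_contra! hlt
    have := (Finset.card_le_sum_choose_vcDim_of_forall_subset hE).trans
      (Finset.sum_le_sum_of_subset (Finset.range_subset_range.2 hlt))
    omega
  obtain ⟨S, hS, hSd⟩ := Finset.exists_shatters_card_eq_of_le_vcDim hE_nonempty hd
  refine ⟨S, hS.subset_of_forall_subset hE, hSd, fun T hT ↦ ?_⟩
  obtain ⟨e, he, heT⟩ := hS hT
  exact ⟨e, he, Finset.inter_comm e S ▸ heT⟩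
end

section
/- Let H=(X,E) be a twin-free hypergraph (all hyperedges are pairwise distinct and all vertices are pairwise non-twin) and let k ≤ |X| - 1 be a nonnegative integer. Then there exists a set C ⊆ X of size k that induces at least min{|E|, k+1} distinct equivalence classes. -/
/-- Monotonicity: enlarging `C` cannot decrease the number of classes. -/
lemma classes_mono {α : Type*} [DecidableEq α] (E : Finset (Finset α))
    (C C' : Finset α) (h : C ⊆ C') :
    (E.image (fun e => e ∩ C)).card ≤ (E.image (fun e => e ∩ C')).card := by
  have himg : E.image (fun e => e ∩ C)
      = (E.image (fun e => e ∩ C')).image (fun g => g ∩ C) := by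
    rw [Finset.image_image]
    apply Finset.image_congr
    intro e _
    simp only [Function.comp]
    rw [Finset.inter_assoc, Finset.inter_eq_right.mpr h]
  rw [himg]
  exact Finset.card_image_le

/-- In a twin-free hypergraph, for any `k ≤ |X| - 1` there is a set `C` of `k`
vertices inducing at least `min{|E|, k+1}` equivalence classes. -/
theorem stmt_6 {α : Type*} [DecidableEq α] (X : Finset α) (E : Finset (Finset α))
    (hE : ∀ e ∈ E, e ⊆ X)
    (htwinfree : ∀ x ∈ X, ∀ y ∈ X, x ≠ y → ∃ e ∈ E, Xor' (x ∈ e) (y ∈ e))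
    (k : ℕ) (hk : k + 1 ≤ X.card) :
    ∃ C ⊆ X, C.card = k ∧
      min E.card (k + 1) ≤ (E.image (fun e => e ∩ C)).card := by
  clear htwinfree
  induction k with
  | zero =>
    refine ⟨∅, Finset.empty_subset X, Finset.card_empty, ?_⟩
    rcases E.eq_empty_or_nonempty with h | h
    · simp [h]
    · have h1 : 0 < (E.image (fun e => e ∩ (∅ : Finset α))).card :=
        Finset.card_pos.mpr (h.image _)
      omega
  | succ k ih =>
    obtain ⟨C, hCX, hCcard, hCmin⟩ := ih (by omega)
    by_cases hinj : ∀ e ∈ E, ∀ f ∈ E, e ∩ C = f ∩ C → e = f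
    · -- intersections already distinguish all edges
      have hEcard : (E.image (fun e => e ∩ C)).card = E.card :=
        Finset.card_image_of_injOn (fun e he f hf h => hinj e he f hf h)
    -- pick any x ∈ X \ C
      have hss : C ⊂ X := Finset.ssubset_iff_subset_ne.mpr
        ⟨hCX, fun h => by have := congrArg Finset.card h; omega⟩
      obtain ⟨x, hxX, hxC⟩ := Finset.exists_of_ssubset hss
      refine ⟨insert x C, Finset.insert_subset hxX hCX, ?_, ?_⟩
      · rw [Finset.card_insert_of_notMem hxC, hCcard]
      · have := classes_mono E C (insert x C) (Finset.subset_insert x C)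
        omega
    · push_neg at hinj
      obtain ⟨e, he, f, hf, hef, hne⟩ := hinj
      -- pick x in the symmetric difference of e and f
      have hxex : ∃ x, (x ∈ e ∧ x ∉ f) ∨ (x ∈ f ∧ x ∉ e) := by
        by_contra h
        push_neg at h
        exact hne (Finset.ext fun x => by have := h x; tauto)
      -- wlog handled by symmetry: extract x with x ∈ e, x ∉ f (swapping e,f if needed)
      obtain ⟨x, hx⟩ := hxex
      -- normalize so that x ∈ e and x ∉ f
      obtain ⟨e, f, he, hf, hef, hxe, hxf⟩ :
          ∃ e f, e ∈ E ∧ f ∈ E ∧ e ∩ C = f ∩ C ∧ x ∈ e ∧ x ∉ f := by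
        rcases hx with ⟨h1, h2⟩ | ⟨h1, h2⟩
        · exact ⟨e, f, he, hf, hef, h1, h2⟩
        · exact ⟨f, e, hf, he, hef.symm, h1, h2⟩
      have hxX : x ∈ X := hE e he hxe
      have hxC : x ∉ C := fun h => hxf (Finset.mem_of_mem_inter_left
        (hef ▸ Finset.mem_inter.mpr ⟨hxe, h⟩))
      set C' := insert x C with hC'
      refine ⟨C', Finset.insert_subset hxX hCX, ?_, ?_⟩
      · rw [Finset.card_insert_of_notMem hxC, hCcard]
      · -- strict increase in number of classes
        have hmono := classes_mono E C C' (Finset.subset_insert x C)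
        have hneq : (E.image (fun g => g ∩ C)).card ≠ (E.image (fun g => g ∩ C')).card := by
          intro hcard
          have himg : E.image (fun g => g ∩ C)
              = (E.image (fun g => g ∩ C')).image (fun g => g ∩ C) := by
            rw [Finset.image_image]
            apply Finset.image_congr
            intro g _
            simp only [Function.comp]
            rw [Finset.inter_assoc, Finset.inter_eq_right.mpr (Finset.subset_insert x C)]
          have hinjOn : Set.InjOn (fun g => g ∩ C) (E.image (fun g => g ∩ C')) := by
            rw [← Finset.card_image_iff, ← himg, hcard]
          have h1 : e ∩ C' ∈ E.image (fun g => g ∩ C') := Finset.mem_image_of_mem _ he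
          have h2 : f ∩ C' ∈ E.image (fun g => g ∩ C') := Finset.mem_image_of_mem _ hf
          have heq : e ∩ C' ∩ C = f ∩ C' ∩ C := by
            rw [Finset.inter_assoc, Finset.inter_eq_right.mpr (Finset.subset_insert x C),
              Finset.inter_assoc, Finset.inter_eq_right.mpr (Finset.subset_insert x C), hef]
          have := hinjOn h1 h2 heq
          have hx1 : x ∈ e ∩ C' := Finset.mem_inter.mpr ⟨hxe, Finset.mem_insert_self x C⟩
          rw [this] at hx1
          exact hxf (Finset.mem_of_mem_inter_left hx1)
        omega
end

section
/- Let H=(X,E) be a twin-free hypergraph with at least one nonempty hyperedge, and let C ⊊ X be a set of vertices inducing strictly fewer than |E| distinct equivalence classes. Then there exists a vertex x ∈ X \ C such that C ∪ {x} induces strictly more equivalence classes than C. -/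
lemma stmt_7_aux {α : Type*} [DecidableEq α] (X : Finset α) (E : Finset (Finset α))
    (hE : ∀ e ∈ E, e ⊆ X) (C : Finset α)
    (e1 e2 : Finset α) (he1 : e1 ∈ E) (he2 : e2 ∈ E)
    (heq : e1 ∩ C = e2 ∩ C) (x : α) (hx1 : x ∈ e1) (hx2 : x ∉ e2) :
    ∃ x ∈ X \ C,
      (E.image (fun e => e ∩ C)).card <
        (E.image (fun e => e ∩ insert x C)).card := by
  have hxC : x ∉ C := by
    intro hxC
    have : x ∈ e2 ∩ C := heq ▸ Finset.mem_inter.2 ⟨hx1, hxC⟩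
    exact hx2 (Finset.mem_inter.1 this).1
  refine ⟨x, Finset.mem_sdiff.2 ⟨hE e1 he1 hx1, hxC⟩, ?_⟩
  have himg : E.image (fun e => e ∩ C)
      = (E.image (fun e => e ∩ insert x C)).image (fun s => s ∩ C) := by
    rw [Finset.image_image]
    apply Finset.image_congr
    intro e _
    simp only [Function.comp]
    rw [Finset.inter_assoc]
    congr 1
    rw [Finset.insert_inter_of_notMem hxC, Finset.inter_self]
  rw [himg]
  apply lt_of_le_of_ne (Finset.card_image_le)
  intro hcard
  have hinj := Finset.injOn_of_card_image_eq hcard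
  have hm1 : e1 ∩ insert x C ∈ E.image (fun e => e ∩ insert x C) :=
    Finset.mem_image_of_mem _ he1
  have hm2 : e2 ∩ insert x C ∈ E.image (fun e => e ∩ insert x C) :=
    Finset.mem_image_of_mem _ he2
  have heqC : (e1 ∩ insert x C) ∩ C = (e2 ∩ insert x C) ∩ C := by
    rw [Finset.inter_assoc, Finset.inter_assoc,
      Finset.insert_inter_of_notMem hxC, Finset.inter_self, heq]
  have := hinj hm1 hm2 heqC
  have hx1' : x ∈ e1 ∩ insert x C :=
    Finset.mem_inter.2 ⟨hx1, Finset.mem_insert_self _ _⟩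
  rw [this] at hx1'
  exact hx2 (Finset.mem_inter.1 hx1').1

/-- In a twin-free hypergraph with a nonempty hyperedge, if `C ⊊ X` induces
fewer than `|E|` classes, then some vertex outside `C` can be added to strictly
increase the number of induced equivalence classes. -/
theorem stmt_7 {α : Type*} [DecidableEq α] (X : Finset α) (E : Finset (Finset α))
    (hE : ∀ e ∈ E, e ⊆ X)
    (htwinfree : ∀ x ∈ X, ∀ y ∈ X, x ≠ y → ∃ e ∈ E, Xor' (x ∈ e) (y ∈ e))
    (hne : ∃ e ∈ E, e ≠ ∅)
    (C : Finset α) (hC : C ⊂ X)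
    (hfew : (E.image (fun e => e ∩ C)).card < E.card) :
    ∃ x ∈ X \ C,
      (E.image (fun e => e ∩ C)).card <
        (E.image (fun e => e ∩ insert x C)).card := by
  obtain ⟨e1, he1, e2, he2, hne12, heq⟩ :=
    Finset.exists_ne_map_eq_of_card_lt_of_maps_to hfew
      (fun e he => Finset.mem_image_of_mem _ he)
  have : ∃ x, (x ∈ e1 ∧ x ∉ e2) ∨ (x ∈ e2 ∧ x ∉ e1) := by
    by_contra h
    push_neg at h
    exact hne12 (Finset.ext fun a => by
      have := h a
      constructor <;> intro ha <;> by_contra hb <;> tauto)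
  obtain ⟨x, hx | hx⟩ := this
  · exact stmt_7_aux X E hE C e1 e2 he1 he2 heq x hx.1 hx.2
  · exact stmt_7_aux X E hE C e2 e1 he2 he1 heq.symm x hx.1 hx.2
end

section
/- Let H=(X,E) be a hypergraph in which any two distinct hyperedges intersect in at most one vertex. Then for any C ⊆ X, the number of distinct equivalence classes induced by C is at most (number of hyperedges containing at least two vertices of C) + |C| + 1. -/
/-- In a hypergraph where distinct hyperedges share at most one vertex, any set
`C` induces at most (number of hyperedges containing ≥ 2 vertices of `C`)
`+ |C| + 1` equivalence classes. -/
theorem stmt_9 {α : Type*} [DecidableEq α] (X : Finset α) (E : Finset (Finset α))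
    (hE : ∀ e ∈ E, e ⊆ X)
    (hlin : ∀ e₁ ∈ E, ∀ e₂ ∈ E, e₁ ≠ e₂ → (e₁ ∩ e₂).card ≤ 1)
    (C : Finset α) (hC : C ⊆ X) :
    (E.image (fun e => e ∩ C)).card ≤
      (E.filter (fun e => 2 ≤ (e ∩ C).card)).card + C.card + 1 := by
  classical
  have hsub : (E.image (fun e => e ∩ C)) ⊆
      ((E.filter (fun e => 2 ≤ (e ∩ C).card)).image (fun e => e ∩ C)) ∪
      insert ∅ (C.image (fun x => ({x} : Finset α))) := by
    intro s hs
    simp only [Finset.mem_image] at hs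
    obtain ⟨e, he, rfl⟩ := hs
    by_cases h : 2 ≤ (e ∩ C).card
    · exact Finset.mem_union_left _
        (Finset.mem_image_of_mem _ (Finset.mem_filter.mpr ⟨he, h⟩))
    · apply Finset.mem_union_right
      push_neg at h
      interval_cases hc : (e ∩ C).card
      · simp [Finset.card_eq_zero.mp hc]
      · obtain ⟨x, hx⟩ := Finset.card_eq_one.mp hc
        have hxC : x ∈ C := by
          have : x ∈ e ∩ C := hx ▸ Finset.mem_singleton_self x
          exact (Finset.mem_inter.mp this).2
        simp only [Finset.mem_insert, Finset.mem_image]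
        exact Or.inr ⟨x, hxC, hx.symm⟩
  calc (E.image (fun e => e ∩ C)).card
      ≤ (((E.filter (fun e => 2 ≤ (e ∩ C).card)).image (fun e => e ∩ C)) ∪
          insert ∅ (C.image (fun x => ({x} : Finset α)))).card :=
        Finset.card_le_card hsub
    _ ≤ ((E.filter (fun e => 2 ≤ (e ∩ C).card)).image (fun e => e ∩ C)).card +
          (insert ∅ (C.image (fun x => ({x} : Finset α)))).card :=
        Finset.card_union_le _ _
    _ ≤ (E.filter (fun e => 2 ≤ (e ∩ C).card)).card + (C.card + 1) := by
        refine Nat.add_le_add Finset.card_image_le ?_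
        calc (insert ∅ (C.image (fun x => ({x} : Finset α)))).card
            ≤ (C.image (fun x => ({x} : Finset α))).card + 1 :=
              Finset.card_insert_le _ _
          _ ≤ C.card + 1 := Nat.add_le_add_right Finset.card_image_le 1
    _ = (E.filter (fun e => 2 ≤ (e ∩ C).card)).card + C.card + 1 := by ring
end

section
/- Let G be a finite simple graph and let V₁, V₂ ⊆ V(G) be vertex sets with graph distance d(V₁, V₂) ≥ 3 (every vertex of V₁ is at distance at least 3 from every vertex of V₂). Then the number of distinct nonempty sets of the form N[v] ∩ (V₁ ∪ V₂) over v ∈ V(G) equals the number of distinct nonempty sets N[v] ∩ V₁ plus the number of distinct nonempty sets N[v] ∩ V₂. -/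
/-- If `V₁` and `V₂` are vertex sets at distance at least 3 apart, the number of
distinct nonempty closed-neighborhood traces on `V₁ ∪ V₂` is the sum of the
numbers of distinct nonempty traces on `V₁` and on `V₂`. -/
theorem stmt_11 {V : Type*} [Fintype V] [DecidableEq V] (G : SimpleGraph V)
    [DecidableRel G.Adj] (V₁ V₂ : Finset V)
    (hdist : ∀ u ∈ V₁, ∀ w ∈ V₂, ∀ p : G.Walk u w, 3 ≤ p.length) :
    ((Finset.univ.image (fun v => (insert v (G.neighborFinset v)) ∩ (V₁ ∪ V₂))).filter
        (fun s => s ≠ ∅)).card =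
      ((Finset.univ.image (fun v => (insert v (G.neighborFinset v)) ∩ V₁)).filter
          (fun s => s ≠ ∅)).card +
        ((Finset.univ.image (fun v => (insert v (G.neighborFinset v)) ∩ V₂)).filter
          (fun s => s ≠ ∅)).card := by
  classical
  -- key lemma: no vertex's closed neighborhood meets both V₁ and V₂
  have key : ∀ v : V, ¬ (((insert v (G.neighborFinset v)) ∩ V₁).Nonempty ∧
      ((insert v (G.neighborFinset v)) ∩ V₂).Nonempty) := by
    rintro v ⟨⟨x, hx⟩, ⟨y, hy⟩⟩
    simp only [Finset.mem_inter, Finset.mem_insert, SimpleGraph.mem_neighborFinset] at hx hy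
    obtain ⟨hx1, hx2⟩ := hx
    obtain ⟨hy1, hy2⟩ := hy
    -- build walk x → v
    have : ∃ p : G.Walk x y, p.length ≤ 2 := by
      rcases hx1 with rfl | hxa
      · rcases hy1 with rfl | hya
        · exact ⟨SimpleGraph.Walk.nil, by simp⟩
        · exact ⟨SimpleGraph.Walk.cons hya SimpleGraph.Walk.nil, by simp⟩
      · rcases hy1 with rfl | hya
        · exact ⟨SimpleGraph.Walk.cons hxa.symm SimpleGraph.Walk.nil, by simp⟩
        · exact ⟨SimpleGraph.Walk.cons hxa.symm (SimpleGraph.Walk.cons hya SimpleGraph.Walk.nil),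
            by simp⟩
    obtain ⟨p, hp⟩ := this
    have := hdist x hx2 y hy2 p
    omega
  have huv : ∀ v : V, (insert v (G.neighborFinset v)) ∩ (V₁ ∪ V₂) =
      (insert v (G.neighborFinset v)) ∩ V₁ ∪ (insert v (G.neighborFinset v)) ∩ V₂ := by
    intro v; exact Finset.inter_union_distrib_left _ _ _
  set N := fun v : V => insert v (G.neighborFinset v) with hN
  have hset : ((Finset.univ.image (fun v => N v ∩ (V₁ ∪ V₂))).filter (fun s => s ≠ ∅)) =
      ((Finset.univ.image (fun v => N v ∩ V₁)).filter (fun s => s ≠ ∅)) ∪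
      ((Finset.univ.image (fun v => N v ∩ V₂)).filter (fun s => s ≠ ∅)) := by
    ext s
    simp only [Finset.mem_union, Finset.mem_filter, Finset.mem_image, Finset.mem_univ,
      true_and, ne_eq, ← Finset.nonempty_iff_ne_empty]
    constructor
    · rintro ⟨⟨v, rfl⟩, hne⟩
      rw [huv v] at hne ⊢
      rcases not_and_or.mp (key v) with h | h
      · rw [Finset.not_nonempty_iff_eq_empty] at h
        rw [h, Finset.empty_union] at hne ⊢
        exact Or.inr ⟨⟨v, rfl⟩, hne⟩
      · rw [Finset.not_nonempty_iff_eq_empty] at h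
        rw [h, Finset.union_empty] at hne ⊢
        exact Or.inl ⟨⟨v, rfl⟩, hne⟩
    · rintro (⟨⟨v, rfl⟩, hne⟩ | ⟨⟨v, rfl⟩, hne⟩)
      · have h2 : N v ∩ V₂ = ∅ := by
          rw [← Finset.not_nonempty_iff_eq_empty]
          intro h; exact key v ⟨hne, h⟩
        refine ⟨⟨v, ?_⟩, hne⟩
        rw [huv v, h2, Finset.union_empty]
      · have h1 : N v ∩ V₁ = ∅ := by
          rw [← Finset.not_nonempty_iff_eq_empty]
          intro h; exact key v ⟨h, hne⟩
        refine ⟨⟨v, ?_⟩, hne⟩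
        rw [huv v, h1, Finset.empty_union]
  have hdisj : Disjoint
      ((Finset.univ.image (fun v => N v ∩ V₁)).filter (fun s => s ≠ ∅))
      ((Finset.univ.image (fun v => N v ∩ V₂)).filter (fun s => s ≠ ∅)) := by
    rw [Finset.disjoint_left]
    rintro s hs1 hs2
    simp only [Finset.mem_filter, Finset.mem_image, Finset.mem_univ, true_and, ne_eq,
      ← Finset.nonempty_iff_ne_empty] at hs1 hs2
    obtain ⟨⟨v, rfl⟩, hne⟩ := hs1
    obtain ⟨⟨w, hw⟩, hne2⟩ := hs2
    obtain ⟨x, hx⟩ := hne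
    have hx2 : x ∈ N w ∩ V₂ := hw ▸ hx
    simp only [Finset.mem_inter] at hx hx2
    have := hdist x hx.2 x hx2.2 SimpleGraph.Walk.nil
    simp at this
  rw [hset, Finset.card_union_of_disjoint hdisj]
end

section
/- Let G be a graph and let G' be constructed from G as follows: vertex set X = V(G) × {1,…,k} on one side, and on the other side, a vertex f_{u,i,v,j} for each edge uv ∈ E(G) and each pair i,j ∈ {1,…,k}, adjacent exactly to (u,i) and (v,j), plus, for each subset L ⊆ {1,…,k} with |L| ≠ 2, a vertex adjacent exactly to all (u,i) with u ∈ V(G), i ∈ L. If G contains a clique {v₁,…,v_k} of size k, then the set S = {(v₁,1),…,(v_k,k)} ⊆ X is shattered in the bipartite incidence structure: for every subset S' ⊆ S there is a vertex of the second side whose neighborhood intersected with S equals S'. -/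
/-- In the reduction from Clique to VC Dimension: if `G` has a clique
`{v₁,…,v_k}`, the set `S = {(v₁,1),…,(v_k,k)}` is shattered by the family of
neighborhoods of the second-side vertices of the constructed bipartite graph. -/
theorem stmt_14 {V : Type*} [Fintype V] [DecidableEq V] (G : SimpleGraph V)
    (k : ℕ) (hk : 1 ≤ k) (vs : Fin k → V) (hinj : Function.Injective vs)
    (hclique : ∀ i j : Fin k, i ≠ j → G.Adj (vs i) (vs j)) :
    ∀ S' ⊆ {p : V × Fin k | ∃ i : Fin k, p = (vs i, i)},
      ∃ A : Set (V × Fin k),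
        ((∃ (u v : V) (i j : Fin k), G.Adj u v ∧
            A = ({(u, i), (v, j)} : Set (V × Fin k))) ∨
          (∃ L : Finset (Fin k), L.card ≠ 2 ∧ A = {p : V × Fin k | p.2 ∈ L})) ∧
        A ∩ {p : V × Fin k | ∃ i : Fin k, p = (vs i, i)} = S' := by
  classical
  intro S' hS'
  set T : Finset (Fin k) := Finset.univ.filter (fun i => (vs i, i) ∈ S') with hT
  have hmem : ∀ i, i ∈ T ↔ (vs i, i) ∈ S' := by simp [hT]
  have hSeq : ∀ p ∈ S', p = (vs p.2, p.2) := by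
    intro p hp
    obtain ⟨i, rfl⟩ := hS' hp
    rfl
  by_cases hcard : T.card = 2
  · obtain ⟨i, j, hij, hTij⟩ := Finset.card_eq_two.mp hcard
    refine ⟨{(vs i, i), (vs j, j)}, Or.inl ⟨vs i, vs j, i, j, hclique i j hij, rfl⟩, ?_⟩
    ext p
    simp only [Set.mem_inter_iff, Set.mem_insert_iff, Set.mem_singleton_iff, Set.mem_setOf_eq]
    constructor
    · rintro ⟨(rfl | rfl), _⟩
      · exact (hmem i).mp (by simp [hTij])
      · exact (hmem j).mp (by simp [hTij])
    · intro hp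
      have hpe := hSeq p hp
      have h2 : p.2 ∈ T := (hmem p.2).mpr (by rw [← hpe]; exact hp)
      rw [hTij] at h2
      simp only [Finset.mem_insert, Finset.mem_singleton] at h2
      rcases h2 with h2 | h2
      · exact ⟨Or.inl (by rw [hpe, h2]), ⟨p.2, hpe⟩⟩
      · exact ⟨Or.inr (by rw [hpe, h2]), ⟨p.2, hpe⟩⟩
  · refine ⟨{p : V × Fin k | p.2 ∈ T}, Or.inr ⟨T, hcard, rfl⟩, ?_⟩
    ext p
    simp only [Set.mem_inter_iff, Set.mem_setOf_eq]
    constructor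
    · rintro ⟨h1, i, rfl⟩
      exact (hmem i).mp h1
    · intro hp
      have hpe := hSeq p hp
      exact ⟨(hmem p.2).mpr (by rw [← hpe]; exact hp), ⟨p.2, hpe⟩⟩
end
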